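/- arXiv:1506.07709 — 7 statements merged into one kernel-verified Lean document; each statement's English description precedes it below -/
import Mathlib

section
/- Let |ψ_coh⟩ = (1/√N) Σ_{j=1}^N e^{iφ_j} |j⟩ be a maximally coherent state in C^N and let |ξ⟩ be any unit vector such that |⟨ψ_coh|ξ⟩|² = 1 − ε. Then the l1-coherence of |ξ⟩ satisfies C_{l1}(|ξ⟩) ≥ N − 1 − εN. -/
/-- If `ξ` is a unit vector with overlap `1 - ε` with the maximally
coherent state `ψ_coh = (1/√N) Σ_j e^{iφ_j} |j⟩`, then its `l₁`-coherence
`(Σ_j ‖ξ_j‖)² - 1` is at least `N - 1 - εN`. -/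
theorem stmt0 (N : ℕ) (hN : 0 < N) (φ : Fin N → ℝ) (ξ : Fin N → ℂ) (ε : ℝ)
    (hξ : ∑ j, ‖ξ j‖ ^ 2 = 1)
    (hover : ‖∑ j, (starRingEnd ℂ)
        (((Real.sqrt N)⁻¹ : ℝ) * Complex.exp (Complex.I * (φ j))) * ξ j‖ ^ 2 = 1 - ε) :
    (N : ℝ) - 1 - ε * N ≤ (∑ j, ‖ξ j‖) ^ 2 - 1 := by
  set T : ℂ := ∑ j, (starRingEnd ℂ) (Complex.exp (Complex.I * (φ j))) * ξ j with hT
  have hNpos : (0:ℝ) < N := by exact_mod_cast hN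
  have hsqrt : (0:ℝ) < Real.sqrt N := Real.sqrt_pos.2 hNpos
  have hfactor : (∑ j, (starRingEnd ℂ)
      (((Real.sqrt N)⁻¹ : ℝ) * Complex.exp (Complex.I * (φ j))) * ξ j)
      = (((Real.sqrt N)⁻¹ : ℝ) : ℂ) * T := by
    rw [hT, Finset.mul_sum]
    refine Finset.sum_congr rfl fun j _ => ?_
    rw [map_mul, Complex.conj_ofReal, mul_assoc]
  have hTnorm : ‖T‖ ≤ ∑ j, ‖ξ j‖ := by
    refine le_trans (norm_sum_le _ _) (Finset.sum_le_sum fun j _ => ?_)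
    rw [norm_mul]
    have : ‖(starRingEnd ℂ) (Complex.exp (Complex.I * (φ j)))‖ = 1 := by
      rw [RCLike.norm_conj]
      simp [Complex.norm_exp]
    rw [this, one_mul]
  have hover2 : ((Real.sqrt N)⁻¹) ^ 2 * ‖T‖ ^ 2 = 1 - ε := by
    rw [← hover, hfactor, norm_mul, mul_pow]
    norm_num [abs_of_pos hsqrt]
  have hsq : Real.sqrt N ^ 2 = N := Real.sq_sqrt hNpos.le
  have hN1 : ‖T‖ ^ 2 = (1 - ε) * N := by
    rw [inv_pow, hsq, inv_mul_eq_div, div_eq_iff hNpos.ne'] at hover2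
    exact hover2
  have hle : ‖T‖ ^ 2 ≤ (∑ j, ‖ξ j‖) ^ 2 := by
    have h0 : (0:ℝ) ≤ ‖T‖ := norm_nonneg _
    nlinarith [hTnorm]
  nlinarith [hN1, hle]
end

section
/- Let N be odd, φ ∈ R^N, and χ ∈ R^N with |χ_j| ≤ ε for all j and ε ≤ π/2. Define |ψ^φ⟩ = (1/√N) Σ_j e^{iφ_j}|j⟩ and |ξ⟩ = |ψ^{φ+χ}⟩. Then |⟨ψ^φ|ξ⟩|² ≥ 1 − (1 − 1/N²) sin²(ε). -/
/-!
Up to the factor `1/N`, the overlap is `S = ∑ j, exp (χ j * I)`, and `cos χ_j ≥ cos ε ≥ 0`. If `b` has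
nonnegative real part, `normSq (b + exp (x * I))` is affine in `(cos x, sin x)` with a nonnegative
`cos`-coefficient, so over `|x| ≤ ε` it is minimised at `x = ±ε`. Moving the phases to `±ε` one at a time
therefore only decreases `|S|²`, and at such a vertex, with `p` phases `ε` and `q` phases `-ε`,
`|S|² = N² cos² ε + (p - q)² sin² ε`, where `p - q` is odd because `p + q = N` is.
-/

open Complex Finset

lemma normSq_add_exp_mul_I (b : ℂ) (y : ℝ) :
    normSq (b + exp (y * I)) = normSq b + 1 + 2 * (b.re * Real.cos y + b.im * Real.sin y) := by
  rw [normSq_apply, normSq_apply]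
  simp only [add_re, add_im, exp_ofReal_mul_I_re, exp_ofReal_mul_I_im]
  linear_combination Real.sin_sq_add_cos_sq y

lemma normSq_add_exp_mul_I_le_of_abs_le {b : ℂ} (hb : 0 ≤ b.re) {x ε : ℝ} (hx : |x| ≤ ε)
    (hε : ε ≤ Real.pi / 2) :
    normSq (b + exp (ε * I)) ≤ normSq (b + exp (x * I)) ∨
      normSq (b + exp (↑(-ε) * I)) ≤ normSq (b + exp (x * I)) := by
  obtain ⟨hx₁, hx₂⟩ := abs_le.mp hx
  have hcos : Real.cos ε ≤ Real.cos x := by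
    rw [← Real.cos_abs x]
    exact Real.cos_le_cos_of_nonneg_of_le_pi (abs_nonneg x) (by linarith [Real.pi_pos]) hx
  have hsin_le : Real.sin x ≤ Real.sin ε :=
    Real.sin_le_sin_of_le_of_le_pi_div_two (by linarith) hε hx₂
  have hsin_ge : Real.sin (-ε) ≤ Real.sin x :=
    Real.sin_le_sin_of_le_of_le_pi_div_two (by linarith) (by linarith) hx₁
  have hre : b.re * Real.cos ε ≤ b.re * Real.cos x := mul_le_mul_of_nonneg_left hcos hb
  simp only [normSq_add_exp_mul_I, Real.cos_neg, Real.sin_neg] at hsin_ge ⊢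
  rcases le_total 0 b.im with him | him
  · right; nlinarith [mul_le_mul_of_nonneg_left hsin_ge him]
  · left; nlinarith [mul_le_mul_of_nonpos_left hsin_le him]

lemma re_add_natCast_mul_exp (a : ℂ) (p q : ℕ) (ε : ℝ) :
    (a + p * exp (ε * I) + q * exp (↑(-ε) * I)).re = a.re + (p + q) * Real.cos ε := by
  simp only [add_re, mul_re, natCast_re, natCast_im, exp_ofReal_mul_I_re, Real.cos_neg, zero_mul,
    sub_zero]
  ring

lemma exists_natCast_mul_exp_normSq_le {ι : Type*} (χ : ι → ℝ) {ε : ℝ} (hε : ε ≤ Real.pi / 2)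
    (s : Finset ι) (hχ : ∀ j ∈ s, |χ j| ≤ ε) (a : ℂ) (ha : 0 ≤ a.re) :
    ∃ p q : ℕ, p + q = #s ∧ normSq (a + p * exp (ε * I) + q * exp (↑(-ε) * I)) ≤
      normSq (a + ∑ j ∈ s, exp (χ j * I)) := by
  classical
  induction s using Finset.induction_on generalizing a with
  | empty => exact ⟨0, 0, rfl, by simp⟩
  | insert j s hj ih =>
    have hχj := hχ j (mem_insert_self j s)
    obtain ⟨hx₁, hx₂⟩ := abs_le.mp hχj
    have hε₀ : 0 ≤ ε := (abs_nonneg _).trans hχj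
    have hcos : 0 ≤ Real.cos (χ j) :=
      Real.cos_nonneg_of_neg_pi_div_two_le_of_le (by linarith) (by linarith)
    obtain ⟨p, q, hpq, hle⟩ := ih (fun k hk => hχ k (mem_insert_of_mem hk)) (a + exp (χ j * I))
      (by simpa [exp_ofReal_mul_I_re] using add_nonneg ha hcos)
    have hb : 0 ≤ (a + p * exp (ε * I) + q * exp (↑(-ε) * I)).re := by
      rw [re_add_natCast_mul_exp]
      have := Real.cos_nonneg_of_neg_pi_div_two_le_of_le (by linarith) hε
      positivity
    have hbx : normSq (a + p * exp (ε * I) + q * exp (↑(-ε) * I) + exp (χ j * I)) ≤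
        normSq (a + ∑ k ∈ insert j s, exp (χ k * I)) := by
      rw [sum_insert hj]
      convert hle using 2 <;> ring
    rcases normSq_add_exp_mul_I_le_of_abs_le hb hχj hε with h | h
    · refine ⟨p + 1, q, by rw [card_insert_of_notMem hj]; omega, le_trans (le_of_eq ?_) (h.trans hbx)⟩
      push_cast; ring
    · refine ⟨p, q + 1, by rw [card_insert_of_notMem hj]; omega, le_trans (le_of_eq ?_) (h.trans hbx)⟩
      push_cast; ring

lemma le_normSq_natCast_mul_exp {p q : ℕ} (hpq : Odd (p + q)) (ε : ℝ) :
    ((p + q : ℕ) : ℝ) ^ 2 * Real.cos ε ^ 2 + Real.sin ε ^ 2 ≤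
      normSq (p * exp (ε * I) + q * exp (↑(-ε) * I)) := by
  have hne : (p : ℤ) - q ≠ 0 := by
    rintro h
    obtain rfl : p = q := by omega
    exact Nat.not_odd_iff_even.mpr (Even.add_self p) hpq
  have hsq : (1 : ℝ) ≤ ((p : ℝ) - q) ^ 2 := by
    exact_mod_cast (one_le_sq_iff_one_le_abs _).mpr (Int.one_le_abs hne)
  rw [normSq_apply]
  simp only [add_re, add_im, mul_re, mul_im, natCast_re, natCast_im, exp_ofReal_mul_I_re,
    exp_ofReal_mul_I_im, Real.cos_neg, Real.sin_neg, zero_mul, sub_zero, add_zero]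
  push_cast
  nlinarith [mul_le_mul_of_nonneg_right hsq (sq_nonneg (Real.sin ε))]

lemma conj_amplitude_mul_amplitude (n : ℕ) (x y : ℝ) :
    (starRingEnd ℂ) (((Real.sqrt n)⁻¹ : ℝ) * exp (I * x)) *
      (((Real.sqrt n)⁻¹ : ℝ) * exp (I * (x + y))) = (n : ℂ)⁻¹ * exp (y * I) := by
  have hr : (((Real.sqrt n)⁻¹ : ℝ) : ℂ) * (((Real.sqrt n)⁻¹ : ℝ) : ℂ) = (n : ℂ)⁻¹ := by
    rw [← ofReal_mul, ← mul_inv, Real.mul_self_sqrt (Nat.cast_nonneg n)]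
    push_cast; rfl
  rw [map_mul, conj_ofReal, ← exp_conj, map_mul, conj_I, conj_ofReal, ← hr, mul_mul_mul_comm,
    ← exp_add]
  congr 2
  ring

theorem stmt3_general (N : ℕ) (hNodd : Odd N) (φ χ : Fin N → ℝ) (ε : ℝ)
    (hχ : ∀ j, |χ j| ≤ ε) (hε : ε ≤ Real.pi / 2) :
    1 - (1 - 1 / (N : ℝ) ^ 2) * Real.sin ε ^ 2 ≤
      ‖∑ j, (starRingEnd ℂ) (((Real.sqrt N)⁻¹ : ℝ) * Complex.exp (Complex.I * (φ j))) *
          (((Real.sqrt N)⁻¹ : ℝ) * Complex.exp (Complex.I * (φ j + χ j)))‖ ^ 2 := by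
  obtain ⟨p, q, hpq, hle⟩ := exists_natCast_mul_exp_normSq_le χ hε univ (fun j _ => hχ j) 0 le_rfl
  rw [card_univ, Fintype.card_fin] at hpq
  have hvertex := le_normSq_natCast_mul_exp (hpq ▸ hNodd) ε
  rw [hpq] at hvertex
  simp only [zero_add] at hle
  have hN : (0 : ℝ) < N := by exact_mod_cast hNodd.pos
  simp only [conj_amplitude_mul_amplitude]
  rw [← mul_sum, Complex.sq_norm, map_mul, normSq_inv, normSq_natCast]
  calc 1 - (1 - 1 / (N : ℝ) ^ 2) * Real.sin ε ^ 2
      = ((N : ℝ) * N)⁻¹ * ((N : ℝ) ^ 2 * Real.cos ε ^ 2 + Real.sin ε ^ 2) := by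
        field_simp
        linear_combination (-(N : ℝ) ^ 2) * Real.sin_sq_add_cos_sq ε
    _ ≤ _ := by gcongr; exact hvertex.trans hle

/-- For odd `N` and phase perturbations `|χ_j| ≤ ε ≤ π/2`, the
overlap of the maximally coherent states `ψ^φ` and `ψ^{φ+χ}` satisfies
`|⟨ψ^φ|ψ^{φ+χ}⟩|² ≥ 1 - (1 - 1/N²) sin²ε`. -/
theorem stmt3 (N : ℕ) (hN : 0 < N) (hNodd : Odd N) (φ χ : Fin N → ℝ) (ε : ℝ)
    (hχ : ∀ j, |χ j| ≤ ε) (hε : ε ≤ Real.pi / 2) :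
    1 - (1 - 1 / (N : ℝ) ^ 2) * Real.sin ε ^ 2 ≤
      ‖∑ j, (starRingEnd ℂ) (((Real.sqrt N)⁻¹ : ℝ) * Complex.exp (Complex.I * (φ j))) *
          (((Real.sqrt N)⁻¹ : ℝ) * Complex.exp (Complex.I * (φ j + χ j)))‖ ^ 2 :=
  stmt3_general N hNodd φ χ ε hχ hε
end

section
/- Let U_1,…,U_L be unitary matrices of size N each admitting a decomposition U_j = D(ω^{(j)}) F_N (1 ⊕ Y_j) F_N† D(−φ) with a common right phase vector φ (independent of j). Then the state |ψ^φ⟩ = (1/√N) Σ_k e^{iφ_k}|k⟩ is mutually coherent: for every j and every basis index i, |⟨i| U_j |ψ^φ⟩|² = 1/N. -/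
/-!
`D(-φ)` undoes the phases of `ψ^φ`, leaving the uniform vector, which `F_Nᴴ` sends to `e₀` by the
orthogonality of the `N`-th roots of unity. The block unitary `1 ⊕ Y_j` fixes `e₀`, `F_N` sends it
back to the uniform vector, and `D(ω^{(j)})` only changes the phases of its entries.
-/

open Matrix Complex Finset

theorem IsPrimitiveRoot.sum_range_pow_mul_eq_ite {R : Type*} [CommRing R] [IsDomain R] {ζ : R}
    {N : ℕ} (hζ : IsPrimitiveRoot ζ N) (l : ℕ) :
    ∑ k ∈ range N, ζ ^ (k * l) = if N ∣ l then (N : R) else 0 := by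
  simp_rw [mul_comm _ l, pow_mul]
  split_ifs with hl
  · simp [(hζ.pow_eq_one_iff_dvd l).mpr hl]
  · have hne : ζ ^ l - 1 ≠ 0 := sub_ne_zero.mpr (mt (hζ.pow_eq_one_iff_dvd l).mp hl)
    have hpow : (ζ ^ l) ^ N = 1 := by rw [← pow_mul, mul_comm, pow_mul, hζ.pow_eq_one, one_pow]
    apply mul_right_cancel₀ hne
    rw [geom_sum_mul, hpow, sub_self, zero_mul]

noncomputable def fourierMatrix (N : ℕ) : Matrix (Fin N) (Fin N) ℂ :=
  of fun k l => exp (2 * Real.pi * I * (k : ℕ) * (l : ℕ) / N) / (Real.sqrt N : ℂ)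

theorem fourierMatrix_apply_eq_pow (N : ℕ) (k l : Fin N) :
    fourierMatrix N k l = exp (2 * Real.pi * I / N) ^ ((k : ℕ) * l) / (Real.sqrt N : ℂ) := by
  rw [fourierMatrix, of_apply, ← exp_nat_mul]
  push_cast
  ring_nf

theorem fourierMatrix_conjTranspose_mulVec_const (N : ℕ) [NeZero N] :
    (fourierMatrix N)ᴴ *ᵥ (fun _ => (((Real.sqrt N)⁻¹ : ℝ) : ℂ)) = Pi.single 0 1 := by
  have hζ : IsPrimitiveRoot (star (exp (2 * Real.pi * I / N))) N :=
    (isPrimitiveRoot_exp N (NeZero.ne N)).map_of_injective (starRingEnd ℂ).injective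
  have hN : (N : ℂ) ≠ 0 := Nat.cast_ne_zero.mpr (NeZero.ne N)
  have hsqrt : ((Real.sqrt N : ℝ) : ℂ) * (Real.sqrt N : ℝ) = N := by
    rw [← ofReal_mul, Real.mul_self_sqrt N.cast_nonneg, ofReal_natCast]
  ext l
  calc ((fourierMatrix N)ᴴ *ᵥ fun _ => (((Real.sqrt N)⁻¹ : ℝ) : ℂ)) l
      = (∑ k : Fin N, star (exp (2 * Real.pi * I / N)) ^ ((k : ℕ) * l)) / N := by
        simp only [mulVec, dotProduct, conjTranspose_apply, fourierMatrix_apply_eq_pow, star_div₀,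
          star_pow, Complex.star_def, conj_ofReal, sum_div, ← hsqrt, ofReal_inv]
        refine sum_congr rfl fun k _ => ?_
        rw [mul_comm (k : ℕ)]
        field_simp
    _ = (Pi.single 0 1 : Fin N → ℂ) l := by
        have hdvd : N ∣ (l : ℕ) ↔ l = 0 := by
          rw [Nat.dvd_iff_mod_eq_zero, Nat.mod_eq_of_lt l.isLt, Fin.val_eq_zero_iff]
        rw [Fin.sum_univ_eq_sum_range (fun k => _ ^ (k * l)), hζ.sum_range_pow_mul_eq_ite,
          Pi.single_apply]
        simp [hdvd, apply_ite (· / (N : ℂ)), hN]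

theorem fourierMatrix_mulVec_single_zero (N : ℕ) [NeZero N] :
    fourierMatrix N *ᵥ Pi.single 0 1 = fun _ => (((Real.sqrt N)⁻¹ : ℝ) : ℂ) := by
  ext k
  simp [fourierMatrix]

theorem diagonal_exp_neg_mulVec_exp {n : Type*} [Fintype n] [DecidableEq n] (θ : n → ℝ) (c : ℂ) :
    diagonal (fun k => exp (I * -(θ k))) *ᵥ (fun k => c * exp (I * θ k)) = fun _ => c := by
  ext k
  rw [mulVec_diagonal, mul_left_comm, ← exp_add, mul_neg, neg_add_cancel, exp_zero, mul_one]

theorem norm_diagonal_exp_mulVec_apply {n : Type*} [Fintype n] [DecidableEq n] (θ : n → ℝ)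
    (v : n → ℂ) (i : n) : ‖(diagonal (fun k => exp (I * θ k)) *ᵥ v) i‖ = ‖v i‖ := by
  rw [mulVec_diagonal, norm_mul, norm_exp_I_mul_ofReal, one_mul]

theorem stmt5_general (N L : ℕ) [NeZero N]
    (F : Matrix (Fin N) (Fin N) ℂ)
    (hF : ∀ k l : Fin N, F k l =
      Complex.exp (2 * Real.pi * Complex.I * (k : ℕ) * (l : ℕ) / N) / (Real.sqrt N : ℂ))
    (B : Fin L → Matrix (Fin N) (Fin N) ℂ)
    (hBe : ∀ j, (B j).mulVec (Pi.single 0 1) = Pi.single 0 1)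
    (ω : Fin L → Fin N → ℝ) (φ : Fin N → ℝ)
    (U : Fin L → Matrix (Fin N) (Fin N) ℂ)
    (hU : ∀ j, U j =
      Matrix.diagonal (fun k => Complex.exp (Complex.I * (ω j k))) * F * B j * Fᴴ *
        Matrix.diagonal (fun k => Complex.exp (Complex.I * (-(φ k))))) :
    ∀ (j : Fin L) (i : Fin N),
      ‖(U j).mulVec (fun k => ((Real.sqrt N)⁻¹ : ℝ) * Complex.exp (Complex.I * (φ k))) i‖ ^ 2
        = 1 / N := by
  intro j i
  obtain rfl : F = fourierMatrix N := ext hF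
  rw [hU j, ← mulVec_mulVec, diagonal_exp_neg_mulVec_exp, ← mulVec_mulVec,
    fourierMatrix_conjTranspose_mulVec_const, ← mulVec_mulVec, hBe j, ← mulVec_mulVec,
    fourierMatrix_mulVec_single_zero, norm_diagonal_exp_mulVec_apply, norm_real, Real.norm_eq_abs,
    sq_abs, inv_pow, Real.sq_sqrt N.cast_nonneg, one_div]

/-- If each `U_j` decomposes as `D(ω^(j)) F (1 ⊕ Y_j) Fᴴ D(-φ)`
with a common right phase vector `φ` (the block unitary `1 ⊕ Y_j` being encoded
as a unitary `B j` fixing the first basis vector), then the state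
`ψ^φ = (1/√N) Σ_k e^{iφ_k}|k⟩` is mutually coherent: all measurement
probabilities equal `1/N`. -/
theorem stmt5 (N L : ℕ) [NeZero N]
    (F : Matrix (Fin N) (Fin N) ℂ)
    (hF : ∀ k l : Fin N, F k l =
      Complex.exp (2 * Real.pi * Complex.I * (k : ℕ) * (l : ℕ) / N) / (Real.sqrt N : ℂ))
    (B : Fin L → Matrix (Fin N) (Fin N) ℂ)
    (hB : ∀ j, (B j)ᴴ * B j = 1)
    (hBe : ∀ j, (B j).mulVec (Pi.single 0 1) = Pi.single 0 1)
    (ω : Fin L → Fin N → ℝ) (φ : Fin N → ℝ)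
    (U : Fin L → Matrix (Fin N) (Fin N) ℂ)
    (hU : ∀ j, U j =
      Matrix.diagonal (fun k => Complex.exp (Complex.I * (ω j k))) * F * B j * Fᴴ *
        Matrix.diagonal (fun k => Complex.exp (Complex.I * (-(φ k))))) :
    ∀ (j : Fin L) (i : Fin N),
      ‖(U j).mulVec (fun k => ((Real.sqrt N)⁻¹ : ℝ) * Complex.exp (Complex.I * (φ k))) i‖ ^ 2
        = 1 / N :=
  stmt5_general N L F hF B hBe ω φ U hU
end

section
/- Let N = 2 and let W ∈ U(4) be an arbitrary two-qubit unitary gate given (up to local unitaries) in canonical form W = diag-type matrix with entries parameterized by b₁, b₂, b₃ as in the Kraus–Cirac normal form. Then there exists a product state |x⟩ = |x_A⟩⊗|x_B⟩ such that W|x⟩ is also a product state; explicitly, if b₂ = 0 one can take |x⟩ = |0,1⟩, and if b₂ ≠ 0 one can take |x⟩ proportional to |0⟩ ⊗ (|0⟩ + e^{2ib₃}√(sin b₁ cos b₁ / (sin b₂ cos b₂)) |1⟩), provided sin b₁ cos b₁ / (sin b₂ cos b₂) ≥ 0. -/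
/-!
A vector of `ℂ⁴ = ℂ² ⊗ ℂ²` is a product exactly when its 2×2 coefficient matrix is singular,
`v₀₀ v₁₁ = v₀₁ v₁₀`. The canonical form maps `|0⟩ ⊗ (β|0⟩ + γ|1⟩)` to
`β (W₀₀|00⟩ + W₃₀|11⟩) + γ (W₁₁|01⟩ + W₂₁|10⟩)`, so the product condition reads
`W₀₀ W₃₀ β² = W₁₁ W₂₁ γ²`, and this has a nonzero solution over `ℂ`:
`γ = 0` if `W₀₀ W₃₀ = 0`, and otherwise `γ = 1` with `β` a square root of `W₁₁ W₂₁ / (W₀₀ W₃₀)`.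
-/

/-- The Kronecker (tensor) product of two qubit states, as a vector in `ℂ⁴`
with the ordering `|00⟩,|01⟩,|10⟩,|11⟩`. -/
noncomputable def kron2 (a b : Fin 2 → ℂ) : Fin 4 → ℂ :=
  ![a 0 * b 0, a 0 * b 1, a 1 * b 0, a 1 * b 1]

lemma exists_eq_kron2_of_mul_eq_mul (v : Fin 4 → ℂ) (h : v 0 * v 3 = v 1 * v 2) :
    ∃ a b : Fin 2 → ℂ, v = kron2 a b := by
  by_cases h0 : v 0 = 0
  · rcases mul_eq_zero.mp (by rw [← h, h0, zero_mul] : v 1 * v 2 = 0) with h1 | h2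
    · exact ⟨![0, 1], ![v 2, v 3], by ext i; fin_cases i <;> simp [kron2, h0, h1]⟩
    · exact ⟨![v 1, v 3], ![0, 1], by ext i; fin_cases i <;> simp [kron2, h0, h2]⟩
  · refine ⟨![v 0, v 2], ![1, v 1 / v 0], ?_⟩
    ext i; fin_cases i <;> simp [kron2] <;> field_simp
    linear_combination h

lemma exists_ne_zero_mul_sq_eq_mul_sq {K : Type*} [Field K] [IsAlgClosed K] (A B : K) :
    ∃ v : Fin 2 → K, v ≠ 0 ∧ A * v 0 ^ 2 = B * v 1 ^ 2 := by
  by_cases hA : A = 0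
  · exact ⟨![1, 0], fun h => by simpa using congrFun h 0, by simp [hA]⟩
  · obtain ⟨β, hβ⟩ := IsAlgClosed.exists_eq_mul_self (B / A)
    refine ⟨![β, 1], fun h => by simpa using congrFun h 1, ?_⟩
    simp [sq, ← hβ, mul_div_cancel₀ B hA]

lemma mulVec_kron2_ket_zero (M : Matrix (Fin 4) (Fin 4) ℂ)
    (h01 : M 0 1 = 0) (h10 : M 1 0 = 0) (h20 : M 2 0 = 0) (h31 : M 3 1 = 0) (v : Fin 2 → ℂ) :
    M.mulVec (kron2 ![1, 0] v) = ![M 0 0 * v 0, M 1 1 * v 1, M 2 1 * v 1, M 3 0 * v 0] := by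
  ext i
  fin_cases i <;> simp [kron2, Matrix.mulVec, dotProduct, Fin.sum_univ_four, *]

lemma exists_mulVec_kron2_eq_kron2 (M : Matrix (Fin 4) (Fin 4) ℂ)
    (h01 : M 0 1 = 0) (h10 : M 1 0 = 0) (h20 : M 2 0 = 0) (h31 : M 3 1 = 0) :
    ∃ a b : Fin 2 → ℂ, a ≠ 0 ∧ b ≠ 0 ∧
      ∃ a' b' : Fin 2 → ℂ, M.mulVec (kron2 a b) = kron2 a' b' := by
  obtain ⟨v, hv, hroot⟩ := exists_ne_zero_mul_sq_eq_mul_sq (M 0 0 * M 3 0) (M 1 1 * M 2 1)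
  refine ⟨![1, 0], v, fun h => by simpa using congrFun h 0, hv, ?_⟩
  rw [mulVec_kron2_ket_zero M h01 h10 h20 h31]
  apply exists_eq_kron2_of_mul_eq_mul
  simp only [Matrix.cons_val]
  linear_combination hroot

/-- For a two-qubit gate `W` in Kraus–Cirac canonical form there
exists a (nonzero) product state `|x⟩ = |x_A⟩ ⊗ |x_B⟩` such that `W|x⟩` is also
a product state. -/
theorem stmt8 (b₁ b₂ b₃ : ℝ)
    (W : Matrix (Fin 4) (Fin 4) ℂ)
    (hW : W = !![Complex.exp (Complex.I * b₃) * (Real.cos b₁ : ℝ), 0, 0,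
                   Complex.I * Complex.exp (Complex.I * b₃) * (Real.sin b₁ : ℝ);
                 0, Complex.exp (-(Complex.I * b₃)) * (Real.cos b₂ : ℝ),
                   Complex.I * Complex.exp (-(Complex.I * b₃)) * (Real.sin b₂ : ℝ), 0;
                 0, Complex.I * Complex.exp (-(Complex.I * b₃)) * (Real.sin b₂ : ℝ),
                   Complex.exp (-(Complex.I * b₃)) * (Real.cos b₂ : ℝ), 0;
                 Complex.I * Complex.exp (Complex.I * b₃) * (Real.sin b₁ : ℝ), 0, 0,
                   Complex.exp (Complex.I * b₃) * (Real.cos b₁ : ℝ)]) :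
    ∃ a b : Fin 2 → ℂ, a ≠ 0 ∧ b ≠ 0 ∧
      ∃ a' b' : Fin 2 → ℂ, W.mulVec (kron2 a b) = kron2 a' b' := by
  subst hW
  exact exists_mulVec_kron2_eq_kron2 _ rfl rfl rfl rfl
end

section
/- Given a Latin square λ of size N and a collection of N complex Hadamard matrices H^(1),…,H^(N) of size N (unitary matrices with all entries of modulus 1/√N after rescaling), the N² matrices U^(i,j) = Σ_{k=1}^N H^(j)_{i,k} |λ(j,k)⟩⟨k| (for i,j = 1,…,N) are unitary and form an orthogonal basis of the Hilbert–Schmidt space of N×N complex matrices: Tr(U^(i,j)† U^(i',j')) = N δ_{ii'} δ_{jj'}. -/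
/-!
Each `U^(i,j)` has a single nonzero entry `H^(j)_{i,b}` in every column `b`, placed in row
`λ(j,b)`. Hence `(U^(i,j)† U^(i',j'))_{b b'}` vanishes unless `λ(j,b) = λ(j',b')`. Injectivity of
the rows of `λ` makes `U^(i,j)† U^(i,j)` diagonal with entries `|H^(j)_{i,b}|² = 1`; on the
diagonal of `U^(i,j)† U^(i',j')`, injectivity of the columns of `λ` kills every term when
`j ≠ j'`, and for `j = j'` the trace is the inner product of rows `i` and `i'` of `H^(j)`,
which is `N δ_{ii'}` because `H^(j) H^(j)† = N` follows from `H^(j)† H^(j) = N`.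
-/

open Matrix

namespace Matrix

variable {n R : Type*} [Fintype n] [DecidableEq n]

def shiftMul [Zero R] (σ : n → n) (x : n → R) : Matrix n n R :=
  of fun a b => if a = σ b then x b else 0

section Semiring

variable [Semiring R] [StarRing R]

theorem conjTranspose_shiftMul_mul_shiftMul_apply (σ τ : n → n) (x y : n → R) (b b' : n) :
    ((shiftMul σ x)ᴴ * shiftMul τ y) b b' =
      if σ b = τ b' then star (x b) * y b' else 0 := by
  rw [mul_apply, Finset.sum_eq_single (σ b)]
  · by_cases h : σ b = τ b' <;> simp [shiftMul, h]
  · intro a _ ha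
    simp [shiftMul, ha]
  · exact fun h => absurd (Finset.mem_univ _) h

theorem conjTranspose_shiftMul_mul_self {σ : n → n} (hσ : σ.Injective) {x : n → R}
    (hx : ∀ b, star (x b) * x b = 1) : (shiftMul σ x)ᴴ * shiftMul σ x = 1 := by
  ext b b'
  rw [conjTranspose_shiftMul_mul_shiftMul_apply, one_apply]
  by_cases h : b = b'
  · simp [h, hx]
  · simp [hσ.ne h, h]

theorem trace_conjTranspose_shiftMul_mul_shiftMul (σ τ : n → n) (x y : n → R) :
    ((shiftMul σ x)ᴴ * shiftMul τ y).trace =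
      ∑ b, if σ b = τ b then star (x b) * y b else 0 :=
  Finset.sum_congr rfl fun b _ => conjTranspose_shiftMul_mul_shiftMul_apply σ τ x y b b

theorem trace_conjTranspose_shiftMul_mul_shiftMul_same (σ : n → n) (x y : n → R) :
    ((shiftMul σ x)ᴴ * shiftMul σ y).trace = star x ⬝ᵥ y := by
  simp [trace_conjTranspose_shiftMul_mul_shiftMul, dotProduct]

theorem trace_conjTranspose_shiftMul_mul_shiftMul_of_ne {σ τ : n → n} (h : ∀ b, σ b ≠ τ b)
    (x y : n → R) : ((shiftMul σ x)ᴴ * shiftMul τ y).trace = 0 := by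
  simp [trace_conjTranspose_shiftMul_mul_shiftMul, h]

end Semiring

theorem mul_conjTranspose_eq_smul_one {𝕜 : Type*} [Field 𝕜] [StarRing 𝕜] {A : Matrix n n 𝕜}
    {c : 𝕜} (hc : c ≠ 0) (h : Aᴴ * A = c • 1) : A * Aᴴ = c • 1 := by
  have hinv : (c⁻¹ • A) * Aᴴ = 1 :=
    mul_eq_one_comm.mp (by rw [Matrix.mul_smul, h, smul_smul, inv_mul_cancel₀ hc, one_smul])
  rw [← one_smul 𝕜 (A * Aᴴ), ← mul_inv_cancel₀ hc, mul_smul, ← Matrix.smul_mul, hinv]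

end Matrix

theorem Complex.star_mul_self_of_norm_eq_one {z : ℂ} (hz : ‖z‖ = 1) : star z * z = 1 := by
  simp [Complex.conj_mul', hz]

/-- Werner's shift-and-multiply construction: given a Latin
square `lam` and complex Hadamard matrices `H⁽ʲ⁾` (entries of modulus 1,
unitary after rescaling by `1/√N`), the `N²` matrices
`U^(i,j) = Σ_k H^(j)_{i,k} |λ(j,k)⟩⟨k|` are unitary and orthogonal in the
Hilbert–Schmidt inner product: `Tr(U^(i,j)† U^(i',j')) = N δ_{ii'} δ_{jj'}`. -/
theorem stmt10 (N : ℕ) (hN : 0 < N)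
    (lam : Fin N → Fin N → Fin N)
    (hrow : ∀ j, Function.Bijective (lam j))
    (hcol : ∀ k, Function.Bijective fun j => lam j k)
    (H : Fin N → Matrix (Fin N) (Fin N) ℂ)
    (hHunit : ∀ j, (H j)ᴴ * H j = (N : ℂ) • 1)
    (hHmod : ∀ j a b, ‖H j a b‖ = 1)
    (U : Fin N → Fin N → Matrix (Fin N) (Fin N) ℂ)
    (hUdef : ∀ i j, U i j = Matrix.of fun a b => if a = lam j b then H j i b else 0) :
    (∀ i j, (U i j)ᴴ * U i j = 1) ∧
      ∀ i j i' j', ((U i j)ᴴ * U i' j').trace =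
        if i = i' ∧ j = j' then (N : ℂ) else 0 := by
  have hU : ∀ i j, U i j = shiftMul (lam j) (H j i) := hUdef
  refine ⟨fun i j => ?_, fun i j i' j' => ?_⟩
  · rw [hU]
    exact conjTranspose_shiftMul_mul_self (hrow j).1 fun b =>
      Complex.star_mul_self_of_norm_eq_one (hHmod j i b)
  rcases eq_or_ne j j' with rfl | hj
  · have hrows : H j * (H j)ᴴ = (N : ℂ) • 1 :=
      mul_conjTranspose_eq_smul_one (Nat.cast_ne_zero.mpr hN.ne') (hHunit j)
    have hinner : star (H j i) ⬝ᵥ H j i' = (H j * (H j)ᴴ) i' i := by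
      simp [mul_apply, dotProduct, mul_comm]
    rw [hU, hU, trace_conjTranspose_shiftMul_mul_shiftMul_same, hinner, hrows]
    by_cases hi : i = i' <;> simp [hi, one_apply, Ne.symm]
  · rw [hU, hU, trace_conjTranspose_shiftMul_mul_shiftMul_of_ne fun b h => hj ((hcol b).1 h)]
    simp [hj]
end

section
/- Let λ be a Latin square of size N, P the permutation matrix on C^N ⊗ C^N defined by P = Σ_{k,l} |λ(l,k), k⟩⟨l, k|, and M₁,…,M_m a collection of mutually unbiased bases of C^N (unitaries such that M_i† M_j is a rescaled complex Hadamard matrix for i ≠ j). Then the matrices W^(i) = P (I ⊗ M_i) P^T for i = 1,…,m are mutually entangled: for all i ≠ j, W^(i)† W^(j) = P (I ⊗ M_i† M_j) P^T, and every column of W^(i)† W^(j) is a maximally entangled vector in C^N ⊗ C^N. -/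
open Matrix

open Kronecker

open Function

/-- A unit vector `v` of `ℂ^N ⊗ ℂ^N` is maximally entangled iff its reshaping
`R_{ab} = v_{(a,b)}` satisfies `Rᴴ R = (1/N)·I`, i.e. `√N·R` is unitary. -/
def MaxEnt (N : ℕ) (v : Fin N × Fin N → ℂ) : Prop :=
  (Matrix.of fun a b : Fin N => v (a, b))ᴴ * (Matrix.of fun a b : Fin N => v (a, b)) =
    ((N : ℂ))⁻¹ • 1

/-! Conjugation by `P` only relabels indices along the cell permutation `(j, k) ↦ (λ j k, k)`,
so `W⁽ⁱ⁾ᴴ W⁽ʲ⁾` is the relabelling of `I ⊗ A`, `A = M_iᴴ M_j`. Reshaped to an `N × N` matrix,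
column `c` of it has in column `b` the single nonzero entry `A b c₂`, in row `λ x b` for a fixed
`x`. These rows are distinct because the rows of a Latin square are injective, so the reshaped
matrix has orthogonal columns of squared norm `|A b c₂|² = 1/N`. -/

theorem Equiv.toPEquiv_toMatrix_mul_mul_transpose {m n R : Type*} [Fintype n] [DecidableEq m]
    [DecidableEq n] [NonAssocSemiring R] (τ : m ≃ n) (X : Matrix n n R) :
    (τ.toPEquiv.toMatrix : Matrix m n R) * X * (τ.toPEquiv.toMatrix : Matrix m n R)ᵀ =
      X.submatrix τ τ := by
  rw [← PEquiv.toMatrix_symm, ← Equiv.toPEquiv_symm, PEquiv.toMatrix_toPEquiv_mul,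
    PEquiv.mul_toMatrix_toPEquiv, Equiv.symm_symm, submatrix_submatrix]
  rfl

theorem Matrix.conjTranspose_mul_self_of_injective {α β R : Type*} [Fintype α] [DecidableEq α]
    [DecidableEq β] [Semiring R] [StarRing R] {f : β → α} (hf : Injective f) (v : β → R) :
    (of fun a b => if f b = a then v b else 0)ᴴ * (of fun a b => if f b = a then v b else 0) =
      diagonal fun b => star (v b) * v b := by
  ext b b'
  by_cases h : b = b' <;> simp [mul_apply, hf.eq_iff, h]

section LatinSquare

variable {α β : Type*} (lam : α → β → α) (hcol : ∀ k, Bijective fun j => lam j k)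

noncomputable def latinPerm : α × β ≃ α × β :=
  Equiv.prodCongrLeft fun k => Equiv.ofBijective _ (hcol k)

theorem latinPerm_apply (q : α × β) : latinPerm lam hcol q = (lam q.1 q.2, q.2) :=
  rfl

theorem latinPerm_symm_apply_snd (p : α × β) : ((latinPerm lam hcol).symm p).2 = p.2 :=
  rfl

theorem latinPerm_symm_apply_fst_eq_iff (p : α × β) (x : α) :
    ((latinPerm lam hcol).symm p).1 = x ↔ lam x p.2 = p.1 := by
  calc ((latinPerm lam hcol).symm p).1 = x ↔ (latinPerm lam hcol).symm p = (x, p.2) := by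
        simp [Prod.ext_iff, latinPerm_symm_apply_snd]
    _ ↔ (lam x p.2, p.2) = p := by rw [Equiv.symm_apply_eq, latinPerm_apply, eq_comm]
    _ ↔ lam x p.2 = p.1 := by simp [Prod.ext_iff]

theorem latinPerm_symm_toMatrix [DecidableEq α] [DecidableEq β] {R : Type*} [Zero R] [One R] :
    ((latinPerm lam hcol).symm.toPEquiv.toMatrix : Matrix _ _ R) =
      of fun p q => if p = (lam q.1 q.2, q.2) then 1 else 0 := by
  ext p q
  simp only [PEquiv.toMatrix_apply, Equiv.toPEquiv_apply, Option.mem_def, Option.some_inj,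
    Equiv.symm_apply_eq, of_apply]
  rfl

theorem one_kronecker_submatrix_latinPerm_symm_apply [DecidableEq α] {R : Type*}
    [MulZeroOneClass R] (A : Matrix β β R) (p c : α × β) :
    ((1 : Matrix α α R) ⊗ₖ A).submatrix (latinPerm lam hcol).symm (latinPerm lam hcol).symm p c =
      if lam ((latinPerm lam hcol).symm c).1 p.2 = p.1 then A p.2 c.2 else 0 := by
  simp only [submatrix_apply, kroneckerMap_apply, one_apply, ite_mul, one_mul, zero_mul,
    latinPerm_symm_apply_snd, latinPerm_symm_apply_fst_eq_iff]

end LatinSquare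

theorem maxEnt_of_injective {N : ℕ} {f : Fin N → Fin N} (hf : Injective f) {v : Fin N → ℂ}
    (hv : ∀ b, ‖v b‖ = (Real.sqrt N)⁻¹) :
    MaxEnt N fun p => if f p.2 = p.1 then v p.2 else 0 := by
  have hnormSq : ∀ b, star (v b) * v b = (N : ℂ)⁻¹ := fun b => by
    rw [Complex.star_def, Complex.conj_mul', hv, ← Complex.ofReal_pow, inv_pow,
      Real.sq_sqrt N.cast_nonneg, Complex.ofReal_inv, Complex.ofReal_natCast]
  simp only [MaxEnt]
  rw [conjTranspose_mul_self_of_injective hf, smul_one_eq_diagonal]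
  simp only [hnormSq]

theorem stmt11_general (N m : ℕ)
    (lam : Fin N → Fin N → Fin N)
    (hrow : ∀ j, Function.Bijective (lam j))
    (hcol : ∀ k, Function.Bijective fun j => lam j k)
    (P : Matrix (Fin N × Fin N) (Fin N × Fin N) ℂ)
    (hP : P = Matrix.of fun p q => if p = (lam q.1 q.2, q.2) then 1 else 0)
    (M : Fin m → Matrix (Fin N) (Fin N) ℂ)
    (hMUB : ∀ i j, i ≠ j → ∀ a b, ‖((M i)ᴴ * M j) a b‖ = (Real.sqrt N)⁻¹)
    (W : Fin m → Matrix (Fin N × Fin N) (Fin N × Fin N) ℂ)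
    (hW : ∀ i, W i = P * ((1 : Matrix (Fin N) (Fin N) ℂ) ⊗ₖ M i) * Pᵀ) :
    ∀ i j, i ≠ j →
      (W i)ᴴ * W j = P * ((1 : Matrix (Fin N) (Fin N) ℂ) ⊗ₖ ((M i)ᴴ * M j)) * Pᵀ ∧
        ∀ c, MaxEnt N fun p => ((W i)ᴴ * W j) p c := by
  have hPτ : P = (latinPerm lam hcol).symm.toPEquiv.toMatrix := by
    rw [hP, latinPerm_symm_toMatrix]
  have hconj : ∀ X, P * X * Pᵀ =
      X.submatrix (latinPerm lam hcol).symm (latinPerm lam hcol).symm := by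
    rw [hPτ]
    exact (latinPerm lam hcol).symm.toPEquiv_toMatrix_mul_mul_transpose
  intro i j hij
  have hprod : (W i)ᴴ * W j = P * ((1 : Matrix (Fin N) (Fin N) ℂ) ⊗ₖ ((M i)ᴴ * M j)) * Pᵀ := by
    rw [hW, hW, hconj, hconj, hconj, conjTranspose_submatrix, submatrix_mul_equiv,
      conjTranspose_kronecker, conjTranspose_one, ← mul_kronecker_mul, one_mul]
  refine ⟨hprod, fun c => ?_⟩
  simp only [hprod, hconj, one_kronecker_submatrix_latinPerm_symm_apply]
  exact maxEnt_of_injective (hrow _).1 (v := fun b => ((M i)ᴴ * M j) b c.2)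
    fun b => hMUB i j hij b c.2

/-- Given a Latin square `lam`, its permutation matrix `P`, and
mutually unbiased bases `M₁,…,M_m`, the gates `W⁽ⁱ⁾ = P (I ⊗ M_i) Pᵀ` are
mutually entangled: `W⁽ⁱ⁾ᴴ W⁽ʲ⁾ = P (I ⊗ M_iᴴ M_j) Pᵀ` and each of its columns
is a maximally entangled vector. -/
theorem stmt11 (N m : ℕ) (hN : 0 < N)
    (lam : Fin N → Fin N → Fin N)
    (hrow : ∀ j, Function.Bijective (lam j))
    (hcol : ∀ k, Function.Bijective fun j => lam j k)
    (P : Matrix (Fin N × Fin N) (Fin N × Fin N) ℂ)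
    (hP : P = Matrix.of fun p q => if p = (lam q.1 q.2, q.2) then 1 else 0)
    (M : Fin m → Matrix (Fin N) (Fin N) ℂ)
    (hMunit : ∀ i, (M i)ᴴ * M i = 1)
    (hMUB : ∀ i j, i ≠ j → ∀ a b, ‖((M i)ᴴ * M j) a b‖ = (Real.sqrt N)⁻¹)
    (W : Fin m → Matrix (Fin N × Fin N) (Fin N × Fin N) ℂ)
    (hW : ∀ i, W i = P * ((1 : Matrix (Fin N) (Fin N) ℂ) ⊗ₖ M i) * Pᵀ) :
    ∀ i j, i ≠ j →
      (W i)ᴴ * W j = P * ((1 : Matrix (Fin N) (Fin N) ℂ) ⊗ₖ ((M i)ᴴ * M j)) * Pᵀ ∧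
        ∀ c, MaxEnt N fun p => ((W i)ᴴ * W j) p c :=
  stmt11_general N m lam hrow hcol P hP M hMUB W hW
end

section
/- For a complex Hadamard matrix H of size N (unitary with all entries of modulus 1/√N) and the Latin-square permutation P = Σ_{k,l}|λ(l,k),k⟩⟨l,k| on C^N ⊗ C^N, every column of the unitary matrix W = P(I ⊗ H)P^T is a maximally entangled vector of C^N ⊗ C^N. -/
/-!
`P` is the permutation matrix of the shear `τ (j, k) = (λ(j, k), k)`, so `W` is `I ⊗ H` with rows
and columns relabelled by `τ⁻¹`. Writing the column index as `c = τ (j₀, k₀)`, the column is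
`v (a, b) = [a = λ(j₀, b)] H b k₀`; reshaped, it is the permutation matrix of the Latin row
`λ(j₀, ·)` times `diagonal (H · k₀)`, whose Gram matrix is `diagonal |H b k₀|² = N⁻¹ • 1`.
-/

open Matrix

open Kronecker

section PermutationMatrix

variable {n α : Type*} [DecidableEq n]

theorem Equiv.toPEquiv_symm_toMatrix_eq_of [Zero α] [One α] (f : n ≃ n) :
    (f.symm.toPEquiv.toMatrix : Matrix n n α) = of fun p q => if p = f q then 1 else 0 := by
  ext p q
  simp [PEquiv.toMatrix_apply, Equiv.symm_apply_eq]

variable [Fintype n]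

theorem Equiv.toPEquiv_toMatrix_mul_mul_transpose_s12 [NonAssocSemiring α] (f : n ≃ n)
    (M : Matrix n n α) :
    f.toPEquiv.toMatrix * M * f.toPEquiv.toMatrixᵀ = M.submatrix f f := by
  rw [← PEquiv.toMatrix_symm, ← Equiv.toPEquiv_symm, PEquiv.toMatrix_toPEquiv_mul,
    PEquiv.mul_toMatrix_toPEquiv, Equiv.symm_symm, submatrix_submatrix]
  rfl

theorem Equiv.conjTranspose_mul_self_toPEquiv_toMatrix_mul_diagonal [Semiring α] [StarRing α]
    (σ : n ≃ n) (d : n → α) :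
    (σ.toPEquiv.toMatrix * diagonal d)ᴴ * (σ.toPEquiv.toMatrix * diagonal d) =
      diagonal fun b => star (d b) * d b := by
  rw [PEquiv.toMatrix_toPEquiv_mul, conjTranspose_submatrix, submatrix_mul_equiv,
    diagonal_conjTranspose, diagonal_mul_diagonal, submatrix_id_id]
  rfl

end PermutationMatrix

theorem maxEnt_of_apply_eq_ite {N : ℕ} (σ : Fin N ≃ Fin N) (d : Fin N → ℂ)
    (hd : ∀ b, ‖d b‖ = (Real.sqrt N)⁻¹) {v : Fin N × Fin N → ℂ}
    (hv : ∀ a b, v (a, b) = if a = σ b then d b else 0) : MaxEnt N v := by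
  have hreshape : (of fun a b => v (a, b)) = σ.symm.toPEquiv.toMatrix * diagonal d := by
    ext a b
    simp [hv, mul_diagonal, PEquiv.toMatrix_apply, Equiv.symm_apply_eq]
  rw [MaxEnt, hreshape, σ.symm.conjTranspose_mul_self_toPEquiv_toMatrix_mul_diagonal,
    smul_one_eq_diagonal]
  congr 1
  funext b
  rw [Complex.star_def, Complex.conj_mul', hd, ← Complex.ofReal_pow, inv_pow,
    Real.sq_sqrt N.cast_nonneg, Complex.ofReal_inv, Complex.ofReal_natCast]

theorem stmt12_general (N : ℕ)
    (lam : Fin N → Fin N → Fin N)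
    (hrow : ∀ j, Function.Bijective (lam j))
    (hcol : ∀ k, Function.Bijective fun j => lam j k)
    (P : Matrix (Fin N × Fin N) (Fin N × Fin N) ℂ)
    (hP : P = Matrix.of fun p q => if p = (lam q.1 q.2, q.2) then 1 else 0)
    (H : Matrix (Fin N) (Fin N) ℂ)
    (hHmod : ∀ a b, ‖H a b‖ = (Real.sqrt N)⁻¹)
    (W : Matrix (Fin N × Fin N) (Fin N × Fin N) ℂ)
    (hW : W = P * ((1 : Matrix (Fin N) (Fin N) ℂ) ⊗ₖ H) * Pᵀ) :
    ∀ c, MaxEnt N fun p => W p c := by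
  intro c
  set τ := Equiv.prodCongrLeft fun k => Equiv.ofBijective (fun j => lam j k) (hcol k)
  have hPτ : P = τ.symm.toPEquiv.toMatrix := by
    rw [hP, Equiv.toPEquiv_symm_toMatrix_eq_of]
    rfl
  have hWτ : W = ((1 : Matrix (Fin N) (Fin N) ℂ) ⊗ₖ H).submatrix τ.symm τ.symm := by
    rw [hW, hPτ, Equiv.toPEquiv_toMatrix_mul_mul_transpose_s12]
  refine maxEnt_of_apply_eq_ite (.ofBijective _ (hrow (τ.symm c).1)) (fun b => H b c.2)
    (hHmod · c.2) fun a b => ?_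
  simp [hWτ, τ, one_apply, Equiv.symm_apply_eq]

/-- For a complex Hadamard matrix `H` (unitary with all entries
of modulus `1/√N`) and the Latin-square permutation `P`, every column of
`W = P (I ⊗ H) Pᵀ` is a maximally entangled vector of `ℂ^N ⊗ ℂ^N`. -/
theorem stmt12 (N : ℕ) (hN : 0 < N)
    (lam : Fin N → Fin N → Fin N)
    (hrow : ∀ j, Function.Bijective (lam j))
    (hcol : ∀ k, Function.Bijective fun j => lam j k)
    (P : Matrix (Fin N × Fin N) (Fin N × Fin N) ℂ)
    (hP : P = Matrix.of fun p q => if p = (lam q.1 q.2, q.2) then 1 else 0)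
    (H : Matrix (Fin N) (Fin N) ℂ)
    (hHunit : Hᴴ * H = 1)
    (hHmod : ∀ a b, ‖H a b‖ = (Real.sqrt N)⁻¹)
    (W : Matrix (Fin N × Fin N) (Fin N × Fin N) ℂ)
    (hW : W = P * ((1 : Matrix (Fin N) (Fin N) ℂ) ⊗ₖ H) * Pᵀ) :
    ∀ c, MaxEnt N fun p => W p c :=
  stmt12_general N lam hrow hcol P hP H hHmod W hW
end
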